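/- Let R_+ be the positive half of G_2 realized in the plane Σx_i = 0 inside R³: short roots α₁=η(e₁−e₂), α₂=η(e₁−e₃), α₃=η(e₂−e₃) with multiplicity s, and long roots α₄=η(2e₁−e₂−e₃), α₅=η(e₁+e₂−2e₃), α₆=η(e₁−2e₂+e₃) with multiplicity r, η ≠ 0. Then the 2-form Σ_{i<j} 2 c_{α_i} c_{α_j} (α_i,α_j) B_{α_i,α_j}(a,b) α_i∧α_j vanishes for all a,b ∈ R³ if and only if (s+3r)(s+9r) = 0, i.e. s = −3r or s = −9r. -/
import Mathlib


open Finset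

noncomputable def dotp {N : ℕ} (u v : Fin N → ℝ) : ℝ := ∑ i, u i * v i

/-- The six positive roots of `G₂` realized in `ℝ³`:
`α₁=η(e₁−e₂), α₂=η(e₁−e₃), α₃=η(e₂−e₃)` (short) and
`α₄=η(2e₁−e₂−e₃), α₅=η(e₁+e₂−2e₃), α₆=η(e₁−2e₂+e₃)` (long). -/
noncomputable def g2Root (η : ℝ) : Fin 6 → Fin 3 → ℝ
  | 0 => fun k => η * (![1, -1, 0] k)
  | 1 => fun k => η * (![1, 0, -1] k)
  | 2 => fun k => η * (![0, 1, -1] k)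
  | 3 => fun k => η * (![2, -1, -1] k)
  | 4 => fun k => η * (![1, 1, -2] k)
  | 5 => fun k => η * (![1, -2, 1] k)

/-- Multiplicities: `s` on the short roots, `r` on the long roots. -/
noncomputable def g2Mult (s r : ℝ) : Fin 6 → ℝ
  | 0 => s | 1 => s | 2 => s | 3 => r | 4 => r | 5 => r

set_option maxHeartbeats 2000000 in
/-- The `G₂` 2-form `Σ_{i<j} 2 c_i c_j (α_i,α_j) B_{α_i,α_j}(a,b) α_i∧α_j`
(written as the full double sum) vanishes for all `a, b ∈ ℝ³` iff
`s = −3r` or `s = −9r`. -/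
theorem stmt9 (η s r : ℝ) (hη : η ≠ 0) :
    (∀ a b : Fin 3 → ℝ, ∀ i j : Fin 3,
        ∑ t : Fin 6, ∑ u : Fin 6,
          g2Mult s r t * g2Mult s r u * dotp (g2Root η t) (g2Root η u) *
            (dotp (g2Root η t) a * dotp (g2Root η u) b -
              dotp (g2Root η t) b * dotp (g2Root η u) a) *
            (g2Root η t i * g2Root η u j - g2Root η t j * g2Root η u i) = 0)
      ↔ (s = -3 * r ∨ s = -9 * r) := by
  constructor
  · intro h
    have key := h ![1,0,0] ![0,1,0] 0 1
    simp [Fin.sum_univ_six, dotp, Fin.sum_univ_three, g2Root, g2Mult] at key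
    ring_nf at key
    have h6 : η ^ 6 ≠ 0 := pow_ne_zero _ hη
    have h2 : η ^ 6 * (2 * ((s + 3 * r) * (s + 9 * r))) = 0 := by linear_combination key
    have h3 := (mul_eq_zero.mp h2).resolve_left h6
    have h4 := (mul_eq_zero.mp h3).resolve_left (by norm_num)
    rcases mul_eq_zero.mp h4 with h5 | h5
    · left; linarith
    · right; linarith
  · rintro (rfl | rfl) <;> intro a b i j <;> fin_cases i <;> fin_cases j <;>
      simp [Fin.sum_univ_six, dotp, Fin.sum_univ_three, g2Root, g2Mult] <;> ring
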